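/- Let k ≥ 1 and n ≥ 1 be integers. For β ∈ ℂ not an integer ≤ k+2, the recurrence coefficients satisfy a_{n+k}(−k,β) = a_{n−1}(k+2,β) and b_{n+k}(−k,β) = b_{n−1}(k+2,β); and for α ∈ ℂ not an integer ≤ k+2, a_{n+k}(α,−k) = a_{n−1}(α,k+2) and b_{n+k}(α,−k) = b_{n−1}(α,k+2). -/
import Mathlib


/-- Recurrence coefficient `a_n(a,b)` of the polar Jacobi polynomials. -/
noncomputable def polarCoeffA (a b : ℂ) (n : ℕ) : ℂ :=
  (a + b - 2) * (a - b) / ((a + b + 2 * n) * (a + b + 2 * n + 2))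

/-- Recurrence coefficient `b_n(a,b)` of the polar Jacobi polynomials. -/
noncomputable def polarCoeffB (a b : ℂ) (n : ℕ) : ℂ :=
  -(4 * ((n : ℂ) + 1) * (a + n) * (b + n) * (a + b + n - 1)) /
    ((a + b + 2 * n - 1) * (a + b + 2 * n) ^ 2 * (a + b + 2 * n + 1))

/-- relations between the recurrence coefficients of the polar Jacobi
polynomials under the factorizations of Corollary 2:
`a_{n+k}(-k,β) = a_{n-1}(k+2,β)`, `b_{n+k}(-k,β) = b_{n-1}(k+2,β)`, and
`a_{n+k}(α,-k) = a_{n-1}(α,k+2)`, `b_{n+k}(α,-k) = b_{n-1}(α,k+2)`. -/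
theorem polarJacobi_recurrence_coeff_factorization (k n : ℕ) (hk : 1 ≤ k) (hn : 1 ≤ n) :
    (∀ β : ℂ, (∀ m : ℤ, m ≤ (k : ℤ) + 2 → β ≠ (m : ℂ)) →
      polarCoeffA (-(k : ℂ)) β (n + k) = polarCoeffA ((k : ℂ) + 2) β (n - 1) ∧
      polarCoeffB (-(k : ℂ)) β (n + k) = polarCoeffB ((k : ℂ) + 2) β (n - 1)) ∧
    (∀ α : ℂ, (∀ m : ℤ, m ≤ (k : ℤ) + 2 → α ≠ (m : ℂ)) →
      polarCoeffA α (-(k : ℂ)) (n + k) = polarCoeffA α ((k : ℂ) + 2) (n - 1) ∧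
      polarCoeffB α (-(k : ℂ)) (n + k) = polarCoeffB α ((k : ℂ) + 2) (n - 1)) := by
  have h1 : ((n - 1 : ℕ) : ℂ) = (n : ℂ) - 1 := by
    have := Nat.cast_sub (R := ℂ) hn; simpa using this
  refine ⟨fun β _ => ⟨?_, ?_⟩, fun α _ => ⟨?_, ?_⟩⟩ <;>
    simp only [polarCoeffA, polarCoeffB, Nat.cast_add, h1] <;> ring_nf
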